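/- arXiv:1808.08628 — 3 statements merged into one kernel-verified Lean document; each statement's English description precedes it below -/
import Mathlib

section
/- In the Euclidean plane ℝ² (EuclideanSpace ℝ (Fin 2)), fix radii R > 0 and y > 0 and a center t. If p and q are points with dist(t,p) ≤ dist(t,q), then the Lebesgue area of B(t,R) ∩ B(q,y) is at most the Lebesgue area of B(t,R) ∩ B(p,y), where B(c,r) denotes the open ball of radius r around c. That is, the area of intersection of two disks of fixed radii is nonincreasing in the distance between their centers. -/
/-!
An isometry of the plane moves `t` to the origin and `q` to `(0, dist t q)`, so the area only
depends on `c = dist t q` and is the area of the lens cut out by the disks of radii `R`, `y`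
around `(0, 0)` and `(0, c)`. Each horizontal slice of that lens is the intersection of a fixed
interval centred at `0` with an interval of fixed length centred at `c`, whose length decreases
as `c ≥ 0` grows; integrating over the slices (Fubini) gives the claim.
-/

open MeasureTheory Metric Set

section

variable {E : Type*} [NormedAddCommGroup E] [InnerProductSpace ℝ E] [FiniteDimensional ℝ E]
  [MeasurableSpace E] [BorelSpace E]

theorem volume_ball_inter_ball_eq_of_dist_eq {t q t' q' : E} (h : dist t q = dist t' q')
    (R y : ℝ) : volume (ball t R ∩ ball q y) = volume (ball t' R ∩ ball q' y) := by
  have hnorm : ‖q - t‖ = ‖q' - t'‖ := by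
    rwa [← dist_eq_norm, ← dist_eq_norm, dist_comm, dist_comm q']
  -- the reflection in the perpendicular bisector of `q - t` and `q' - t'` swaps them
  set L := (ℝ ∙ ((q - t) - (q' - t')))ᗮ.reflection
  set f : E → E := fun x => L (x - t) + t'
  have hf : MeasurePreserving f volume volume :=
    (measurePreserving_add_right volume t').comp
      (L.measurePreserving.comp (measurePreserving_sub_right volume t))
  have hiso : Isometry f :=
    (IsometryEquiv.addRight t').isometry.comp (L.isometry.comp (IsometryEquiv.subRight t).isometry)
  have hft : f t = t' := by simp [f]
  have hfq : f q = q' := by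
    change L (q - t) + t' = q'
    rw [Submodule.reflection_sub hnorm, sub_add_cancel]
  have hset : f ⁻¹' (ball t' R ∩ ball q' y) = ball t R ∩ ball q y := by
    rw [preimage_inter, ← hft, ← hfq, hiso.preimage_ball, hiso.preimage_ball]
  rw [← hset, hf.measure_preimage (isOpen_ball.inter isOpen_ball).measurableSet.nullMeasurableSet]

end

theorem volume_Ioo_inter_Ioo_antitoneOn (g h : ℝ) :
    AntitoneOn (fun c => volume (Ioo (-g) g ∩ Ioo (c - h) (c + h))) (Ici 0) := by
  intro a ha b _ hab
  simp only [Ioo_inter_Ioo, Real.volume_Ioo]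
  exact ENNReal.ofReal_le_ofReal (by grind)

theorem setOf_sq_add_sub_sq_lt (r x c : ℝ) :
    {z : ℝ | x ^ 2 + (z - c) ^ 2 < r ^ 2} = Ioo (c - √(r ^ 2 - x ^ 2)) (c + √(r ^ 2 - x ^ 2)) := by
  ext z
  rw [mem_ofPred_eq, ← lt_sub_iff_add_lt', Real.sq_lt, mem_Ioo]
  constructor <;> rintro ⟨h1, h2⟩ <;> constructor <;> linarith

def lens (R y c : ℝ) : Set (ℝ × ℝ) :=
  {x | x.1 ^ 2 + x.2 ^ 2 < R ^ 2 ∧ x.1 ^ 2 + (x.2 - c) ^ 2 < y ^ 2}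

theorem measurableSet_lens (R y c : ℝ) : MeasurableSet (lens R y c) := by
  unfold lens
  measurability

theorem preimage_mk_lens (R y c x : ℝ) :
    Prod.mk x ⁻¹' lens R y c =
      Ioo (-√(R ^ 2 - x ^ 2)) √(R ^ 2 - x ^ 2) ∩ Ioo (c - √(y ^ 2 - x ^ 2)) (c + √(y ^ 2 - x ^ 2)) := by
  calc Prod.mk x ⁻¹' lens R y c
      = {z | x ^ 2 + (z - 0) ^ 2 < R ^ 2} ∩ {z | x ^ 2 + (z - c) ^ 2 < y ^ 2} := by
        simp only [sub_zero]; rfl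
    _ = _ := by rw [setOf_sq_add_sub_sq_lt, setOf_sq_add_sub_sq_lt, zero_sub, zero_add]

theorem volume_lens_antitoneOn (R y : ℝ) : AntitoneOn (fun c => volume (lens R y c)) (Ici 0) := by
  intro a ha b hb hab
  simp only [Measure.volume_eq_prod, Measure.prod_apply (measurableSet_lens R y _)]
  refine lintegral_mono fun x => ?_
  simp only [preimage_mk_lens]
  exact volume_Ioo_inter_Ioo_antitoneOn _ _ ha hb hab

theorem volume_ball_zero_inter_ball_single {R y : ℝ} (hR : 0 < R) (hy : 0 < y) (c : ℝ) :
    volume (ball (0 : EuclideanSpace ℝ (Fin 2)) R ∩ ball (EuclideanSpace.single 1 c) y) =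
      volume (lens R y c) := by
  let φ : EuclideanSpace ℝ (Fin 2) ≃ᵐ ℝ × ℝ :=
    (MeasurableEquiv.toLp 2 (Fin 2 → ℝ)).symm.trans MeasurableEquiv.finTwoArrow
  have hφ : MeasurePreserving φ :=
    (volume_preserving_finTwoArrow ℝ).comp
      (EuclideanSpace.volume_preserving_symm_measurableEquiv_toLp (Fin 2))
  have hset : φ ⁻¹' lens R y c = ball 0 R ∩ ball (EuclideanSpace.single 1 c) y := by
    ext x
    simp [φ, lens, EuclideanSpace.norm_eq, EuclideanSpace.dist_eq, Fin.sum_univ_two,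
      Real.sqrt_lt' hR, Real.sqrt_lt' hy, Real.dist_eq, sq_abs]
  rw [← hset, hφ.measure_preimage (measurableSet_lens R y c).nullMeasurableSet]

theorem volume_ball_inter_ball_eq_volume_lens {R y : ℝ} (hR : 0 < R) (hy : 0 < y)
    (t q : EuclideanSpace ℝ (Fin 2)) :
    volume (ball t R ∩ ball q y) = volume (lens R y (dist t q)) := by
  rw [← volume_ball_zero_inter_ball_single hR hy]
  refine volume_ball_inter_ball_eq_of_dist_eq ?_ R y
  simp

/-- The area of intersection of two disks of fixed radii in the Euclidean plane is
nonincreasing in the distance between their centers. -/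
theorem stmt_6 (R y : ℝ) (hR : 0 < R) (hy : 0 < y)
    (t p q : EuclideanSpace ℝ (Fin 2)) (h : dist t p ≤ dist t q) :
    volume (ball t R ∩ ball q y) ≤ volume (ball t R ∩ ball p y) := by
  rw [volume_ball_inter_ball_eq_volume_lens hR hy, volume_ball_inter_ball_eq_volume_lens hR hy]
  exact volume_lens_antitoneOn R y dist_nonneg dist_nonneg h
end

section
/- Let α > 0, η > 0, P_s > 0, P_j > 0, H > 0, l > 0 (the horizontal jammer offset l_{t,j}), and y > 1. Let ℓ ≥ 0 and φ ∈ ℝ be such that D² := l² + ℓ² − 2lℓcos(φ) > 0. Set A = 1 − ((y−1)P_j/(η P_s))^{2/α} and B = l² − (1−A)H². Then 1 + ((H²+ℓ²)^{−α/2} η P_s) / ((l² + ℓ² − 2lℓcos φ)^{−α/2} P_j) ≤ y if and only if A·ℓ² − 2·l·cos(φ)·ℓ + B ≤ 0. -/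
/-- The SIR condition `1 + ((H²+ℓ²)^(−α/2) η P_s)/((l²+ℓ²−2lℓcos φ)^(−α/2) P_j) ≤ y`
is equivalent to the quadratic condition `A ℓ² − 2 l cos(φ) ℓ + B ≤ 0` of Lemma 1. -/
theorem stmt_9 (α η Ps Pj H l : ℝ) (hα : 0 < α) (hη : 0 < η) (hPs : 0 < Ps)
    (hPj : 0 < Pj) (hH : 0 < H) (hl : 0 < l) (y : ℝ) (hy : 1 < y)
    (ℓ φ : ℝ) (hℓ : 0 ≤ ℓ)
    (hD : 0 < l ^ 2 + ℓ ^ 2 - 2 * l * ℓ * Real.cos φ)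
    (A B : ℝ)
    (hA : A = 1 - ((y - 1) * Pj / (η * Ps)) ^ ((2 : ℝ) / α))
    (hB : B = l ^ 2 - (1 - A) * H ^ 2) :
    1 + ((H ^ 2 + ℓ ^ 2) ^ (-(α / 2)) * η * Ps) /
        ((l ^ 2 + ℓ ^ 2 - 2 * l * ℓ * Real.cos φ) ^ (-(α / 2)) * Pj) ≤ y ↔
      A * ℓ ^ 2 - 2 * l * Real.cos φ * ℓ + B ≤ 0 := by
  set d : ℝ := l ^ 2 + ℓ ^ 2 - 2 * l * ℓ * Real.cos φ with hd
  set h : ℝ := H ^ 2 + ℓ ^ 2 with hh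
  have hhpos : 0 < h := by positivity
  set c : ℝ := (y - 1) * Pj / (η * Ps) with hc
  have hcpos : 0 < c := by
    apply div_pos (by nlinarith) (by positivity)
  have hdenom : 0 < d ^ (-(α / 2)) * Pj := by positivity
  have key : 1 + h ^ (-(α / 2)) * η * Ps / (d ^ (-(α / 2)) * Pj) ≤ y ↔
      d ≤ c ^ ((2:ℝ)/α) * h := by
    rw [← sub_nonneg]
    rw [show y - (1 + h ^ (-(α / 2)) * η * Ps / (d ^ (-(α / 2)) * Pj))
        = (y - 1) - h ^ (-(α / 2)) * η * Ps / (d ^ (-(α / 2)) * Pj) by ring]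
    rw [sub_nonneg, div_le_iff₀ hdenom]
    rw [Real.rpow_neg hhpos.le, Real.rpow_neg hD.le]
    have hP : (0:ℝ) < h ^ (α / 2) := Real.rpow_pos_of_pos hhpos _
    have hQ : (0:ℝ) < d ^ (α / 2) := Real.rpow_pos_of_pos hD _
    have hPi : h ^ (α / 2) * (h ^ (α / 2))⁻¹ = 1 := mul_inv_cancel₀ hP.ne'
    have hQi : d ^ (α / 2) * (d ^ (α / 2))⁻¹ = 1 := mul_inv_cancel₀ hQ.ne'
    rw [show (h ^ (α / 2))⁻¹ * η * Ps = η * Ps / h ^ (α / 2) by ring,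
      show (y - 1) * ((d ^ (α / 2))⁻¹ * Pj) = (y - 1) * Pj / d ^ (α / 2) by ring,
      div_le_div_iff₀ hP hQ]
    rw [show (η * Ps * d ^ (α / 2) ≤ (y - 1) * Pj * h ^ (α / 2)) ↔
        (d ^ (α / 2) ≤ c * h ^ (α / 2)) from by
      rw [hc, div_mul_eq_mul_div, le_div_iff₀ (by positivity)]
      constructor <;> intro hx <;> nlinarith]
    have hch : c * h ^ (α / 2) = (c ^ ((2:ℝ)/α) * h) ^ (α / 2) := by
      rw [Real.mul_rpow (by positivity) hhpos.le, ← Real.rpow_mul hcpos.le,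
        show (2:ℝ)/α*(α/2) = 1 by field_simp, Real.rpow_one]
    rw [hch, Real.rpow_le_rpow_iff hD.le (by positivity) (by positivity)]
  rw [key]
  have h1A : 1 - A = c ^ ((2:ℝ)/α) := by rw [hA]; ring
  constructor <;> intro hx <;> [subst hB; skip] <;> nlinarith [h1A]
end

section
/- For all real numbers k, r with 0 < k ≤ r: ∫_k^r ℓ²·arccos(k/ℓ) dℓ = (r³/3)·arccos(k/r) − (k·r/6)·√(r² − k²) − (k³/6)·ln((r + √(r² − k²))/k). -/
/-! The right-hand side, read as a function of the upper limit `x`, is an antiderivative of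
`x² arccos (k / x)` on `(k, ∞)` which vanishes at `x = k`, so the identity is the fundamental theorem
of calculus. The derivative of `arccos (k / x)` is `k / (x √(x² - k²))` and that of
`log (x + √(x² - k²))` is `1 / √(x² - k²)`; after multiplying out, the non-`arccos` terms of the
derivative cancel because `(√(x² - k²))² = x² - k²`. -/

open Real Set

theorem hasDerivAt_arccos_const_div {k x : ℝ} (hkx : |k| < x) :
    HasDerivAt (fun y => arccos (k / y)) (k / (x * √(x ^ 2 - k ^ 2))) x := by
  have hx : 0 < x := (abs_nonneg k).trans_lt hkx
  obtain ⟨hlow, hup⟩ := abs_lt.mp ((abs_div k x).trans_lt (by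
    rwa [abs_of_pos hx, div_lt_one hx]) : |k / x| < 1)
  have hsub : 0 < x ^ 2 - k ^ 2 := by nlinarith [sq_abs k, abs_nonneg k]
  have hroot : √(1 - (k / x) ^ 2) = √(x ^ 2 - k ^ 2) / x := by
    rw [show 1 - (k / x) ^ 2 = (x ^ 2 - k ^ 2) / x ^ 2 by field_simp,
      sqrt_div hsub.le, sqrt_sq hx.le]
  have hinv : HasDerivAt (fun y => k / y) (k * -(x ^ 2)⁻¹) x := by
    simpa [div_eq_mul_inv] using (hasDerivAt_inv hx.ne').const_mul k
  refine ((hasDerivAt_arccos hlow.ne' hup.ne).comp x hinv).congr_deriv ?_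
  rw [hroot]
  field_simp

theorem continuousOn_arccos_const_div (k : ℝ) {s : Set ℝ} (hs : ∀ x ∈ s, x ≠ 0) :
    ContinuousOn (fun x => arccos (k / x)) s :=
  continuous_arccos.comp_continuousOn (continuousOn_const.div continuousOn_id hs)

theorem hasDerivAt_sqrt_sq_sub {k x : ℝ} (hkx : |k| < x) :
    HasDerivAt (fun y => √(y ^ 2 - k ^ 2)) (x / √(x ^ 2 - k ^ 2)) x := by
  have hsub : 0 < x ^ 2 - k ^ 2 := by nlinarith [sq_abs k, abs_nonneg k]
  refine ((hasDerivAt_sqrt hsub.ne').comp x ((hasDerivAt_pow 2 x).sub_const (k ^ 2))).congr_deriv ?_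
  field_simp
  ring

theorem hasDerivAt_log_add_sqrt_sq_sub_div {k c x : ℝ} (hc : c ≠ 0) (hkx : |k| < x) :
    HasDerivAt (fun y => log ((y + √(y ^ 2 - k ^ 2)) / c)) (1 / √(x ^ 2 - k ^ 2)) x := by
  have hx : 0 < x := (abs_nonneg k).trans_lt hkx
  have hs : 0 < √(x ^ 2 - k ^ 2) := sqrt_pos.2 (by nlinarith [sq_abs k, abs_nonneg k])
  have hxs : x + √(x ^ 2 - k ^ 2) ≠ 0 := by positivity
  refine ((((hasDerivAt_id' x).add (hasDerivAt_sqrt_sq_sub hkx)).div_const c).log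
    (div_ne_zero hxs hc)).congr_deriv ?_
  simp only [Pi.add_apply]
  field_simp
  ring

noncomputable def sqMulArccosAntideriv (k x : ℝ) : ℝ :=
  x ^ 3 / 3 * arccos (k / x) - k * x / 6 * √(x ^ 2 - k ^ 2) -
    k ^ 3 / 6 * log ((x + √(x ^ 2 - k ^ 2)) / k)

theorem hasDerivAt_sqMulArccosAntideriv {k x : ℝ} (hk : k ≠ 0) (hkx : |k| < x) :
    HasDerivAt (sqMulArccosAntideriv k) (x ^ 2 * arccos (k / x)) x := by
  have hx : 0 < x := (abs_nonneg k).trans_lt hkx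
  have hsub : 0 < x ^ 2 - k ^ 2 := by nlinarith [sq_abs k, abs_nonneg k]
  have hs2 : √(x ^ 2 - k ^ 2) ^ 2 = x ^ 2 - k ^ 2 := sq_sqrt hsub.le
  have hs : 0 < √(x ^ 2 - k ^ 2) := sqrt_pos.2 hsub
  have hcube : HasDerivAt (fun y => y ^ 3 / 3) (x ^ 2) x := by
    simpa using (hasDerivAt_pow 3 x).div_const 3
  have hlin : HasDerivAt (fun y => k * y / 6) (k / 6) x := by
    simpa using ((hasDerivAt_id x).const_mul k).div_const 6
  refine (((hcube.mul (hasDerivAt_arccos_const_div hkx)).sub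
      (hlin.mul (hasDerivAt_sqrt_sq_sub hkx))).sub
      ((hasDerivAt_log_add_sqrt_sq_sub_div hk hkx).const_mul (k ^ 3 / 6))).congr_deriv ?_
  field_simp
  linear_combination (-3 * k) * hs2

theorem continuousOn_sqMulArccosAntideriv {k : ℝ} (hk : 0 < k) :
    ContinuousOn (sqMulArccosAntideriv k) (Ici k) := by
  have hpos : ∀ x ∈ Ici k, 0 < x := fun x hx => hk.trans_le hx
  have hsqrt : ContinuousOn (fun x : ℝ => √(x ^ 2 - k ^ 2)) (Ici k) := by fun_prop
  refine ContinuousOn.sub (ContinuousOn.sub ?_ (by fun_prop)) (ContinuousOn.mul continuousOn_const ?_)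
  · exact (by fun_prop : ContinuousOn (fun x : ℝ => x ^ 3 / 3) _).mul
      (continuousOn_arccos_const_div k fun x hx => (hpos x hx).ne')
  · refine ((continuousOn_id.add hsqrt).div_const k).log fun x hx => ?_
    have : 0 < x + √(x ^ 2 - k ^ 2) := add_pos_of_pos_of_nonneg (hpos x hx) (sqrt_nonneg _)
    exact (div_pos this hk).ne'

theorem sqMulArccosAntideriv_self {k : ℝ} (hk : 0 < k) : sqMulArccosAntideriv k k = 0 := by
  simp [sqMulArccosAntideriv, div_self hk.ne', arccos_one]

open intervalIntegral in
/-- `∫_k^r ℓ²·arccos(k/ℓ) dℓ = (r³/3)·arccos(k/r) − (kr/6)·√(r² − k²)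
− (k³/6)·ln((r + √(r² − k²))/k)` for `0 < k ≤ r`. -/
theorem stmt_17 (k r : ℝ) (hk : 0 < k) (hkr : k ≤ r) :
    ∫ ℓ in k..r, ℓ ^ 2 * Real.arccos (k / ℓ) =
      r ^ 3 / 3 * Real.arccos (k / r) -
        k * r / 6 * Real.sqrt (r ^ 2 - k ^ 2) -
        k ^ 3 / 6 * Real.log ((r + Real.sqrt (r ^ 2 - k ^ 2)) / k) := by
  have hderiv : ∀ x ∈ Ioo k r, HasDerivAt (sqMulArccosAntideriv k) (x ^ 2 * arccos (k / x)) x :=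
    fun x hx => hasDerivAt_sqMulArccosAntideriv hk.ne' (by rw [abs_of_pos hk]; exact hx.1)
  have hint : IntervalIntegrable (fun ℓ => ℓ ^ 2 * arccos (k / ℓ)) MeasureTheory.volume k r := by
    refine ContinuousOn.intervalIntegrable ?_
    rw [uIcc_of_le hkr]
    exact (continuousOn_pow 2).mul
      (continuousOn_arccos_const_div k fun x hx => (hk.trans_le hx.1).ne')
  rw [integral_eq_sub_of_hasDerivAt_of_le hkr
    ((continuousOn_sqMulArccosAntideriv hk).mono Icc_subset_Ici_self) hderiv hint,
    sqMulArccosAntideriv_self hk, sub_zero, sqMulArccosAntideriv]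
end
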